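/- A solution of the subgroup-restricted multiple conjugacy problem recovers the AAG shared key: let G be a group, b_1, …, b_N ∈ G, A, B ∈ G with B in the subgroup ⟨b_1, …, b_N⟩. If α ∈ G satisfies α^{-1} b_i α = A^{-1} b_i A for all i = 1, …, N, then α^{-1} B^{-1} α B = A^{-1} B^{-1} A B; that is, the adversary's commutator computed from α equals the shared key [A,B]. -/
import Mathlib


/-- A solution of the subgroup-restricted multiple conjugacy problem recovers
the AAG shared key: if `α⁻¹ * b i * α = A⁻¹ * b i * A` for all `i` and
`B ∈ ⟨b_1, …, b_N⟩`, then `α⁻¹ * B⁻¹ * α * B = A⁻¹ * B⁻¹ * A * B`. -/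
theorem aag_conjugacy_solution_recovers_key
    {G : Type*} [Group G] {N : ℕ} (b : Fin N → G) (A B α : G)
    (hB : B ∈ Subgroup.closure (Set.range b))
    (hα : ∀ i, α⁻¹ * b i * α = A⁻¹ * b i * A) :
    α⁻¹ * B⁻¹ * α * B = A⁻¹ * B⁻¹ * A * B := by
  have key : α⁻¹ * B * α = A⁻¹ * B * A := by
    induction hB using Subgroup.closure_induction with
    | mem x hx => obtain ⟨i, rfl⟩ := hx; exact hα i
    | one => group
    | mul x y hx hy ihx ihy =>
        have : α⁻¹ * (x * y) * α = (α⁻¹ * x * α) * (α⁻¹ * y * α) := by group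
        rw [this, ihx, ihy]; group
    | inv x hx ih =>
        have : α⁻¹ * x⁻¹ * α = (α⁻¹ * x * α)⁻¹ := by group
        rw [this, ih]; group
  have key' : α⁻¹ * B⁻¹ * α = A⁻¹ * B⁻¹ * A := by
    have : α⁻¹ * B⁻¹ * α = (α⁻¹ * B * α)⁻¹ := by group
    rw [this, key]; group
  calc α⁻¹ * B⁻¹ * α * B = (α⁻¹ * B⁻¹ * α) * B := by group
    _ = A⁻¹ * B⁻¹ * A * B := by rw [key']
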